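/- For all natural numbers k ≤ n, the 2k-th derivative at the origin of the n-fold iterate 𝒫ⁿh satisfies (𝒫ⁿh)^{(2k)}(0) = (−1)^k · (2k−1)!! · (𝒫^{n−k}h)(0). In particular 𝒫ⁿh is well-defined and smooth on ℝ for every n. -/

import Mathlib

open MeasureTheory Set

/-- The function `h(x) = 2/(1 + e^{x/2})`. -/
noncomputable def h (x : ℝ) : ℝ := 2 / (1 + Real.exp (x / 2))

/-- The operator `𝒫`, defined by `(𝒫 f)(x) = ∫_x^∞ t·f(t) dt`. -/
noncomputable def P (f : ℝ → ℝ) : ℝ → ℝ := fun x => ∫ t in Set.Ioi x, t * f t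

/-- The double factorial `(2k−1)!! = (2k)!/(2^k · k!)`, with `(−1)!! = 1`. -/
noncomputable def dfac (k : ℕ) : ℝ :=
  (Nat.factorial (2 * k) : ℝ) / (2 ^ k * Nat.factorial k)

lemma dfac_zero : dfac 0 = 1 := by simp [dfac]

lemma dfac_succ (k : ℕ) : dfac (k + 1) = (2 * k + 1) * dfac k := by
  have h1 : 2 * (k + 1) = (2 * k + 1) + 1 := by ring
  unfold dfac
  rw [h1, Nat.factorial_succ, Nat.factorial_succ, Nat.factorial_succ]
  have n1 : ((2:ℝ) ^ k) ≠ 0 := by positivity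
  have n2 : ((Nat.factorial k : ℝ)) ≠ 0 := Nat.cast_ne_zero.2 (Nat.factorial_ne_zero k)
  push_cast
  field_simp
  ring


open FormalMultilinearSeries Real in




lemma analyticAt_of_hasDerivAt {f g : ℝ → ℝ} {x₀ : ℝ}
    (hf : ∀ x, HasDerivAt f (g x) x) (hg : AnalyticAt ℝ g x₀) : AnalyticAt ℝ f x₀ := by
  obtain ⟨p, hp⟩ := hg
  rw [hasFPowerSeriesAt_iff] at hp
  rw [Metric.eventually_nhds_iff] at hp
  obtain ⟨r, hr, hp⟩ := hp
  set a : ℕ → ℝ := fun n => p.coeff n with ha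
  set δ : ℝ := r / 2 with hδ
  have hδ0 : 0 < δ := by positivity
  have hδr : δ < r := by simpa [hδ] using half_lt_self hr
  -- coefficients of the antiderivative
  set c : ℕ → ℝ := fun n => Nat.rec (f x₀) (fun m _ => a m / (m + 1)) n with hc
  set G : ℕ → ℝ → ℝ := fun n z => z ^ n * c n with hG
  set G' : ℕ → ℝ → ℝ := fun n => Nat.rec (fun _ => 0) (fun m _ z => z ^ m * a m) n with hG'
  set u : ℕ → ℝ := fun n => Nat.rec 0 (fun m _ => δ ^ m * |a m|) n with hu
  have hsum_a : Summable fun m => δ ^ m * |a m| := by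
    have h1 : HasSum (fun n => δ ^ n • a n) (g (x₀ + δ)) := by
      apply hp; simp [abs_of_pos hδ0, hδr]
    have h2 := (summable_abs_iff.2 h1.summable)
    refine h2.congr fun n => ?_
    simp [abs_mul, abs_pow, abs_of_pos hδ0]
  have hu_sum : Summable u := by
    rw [← summable_nat_add_iff 1]
    exact hsum_a
  have hG'd : ∀ n z, HasDerivAt (G n) (G' n z) z := by
    intro n z
    cases n with
    | zero => simpa [hG, hG'] using (hasDerivAt_const z (c 0))
    | succ m =>
      show HasDerivAt (fun w : ℝ => w ^ (m + 1) * c (m + 1)) (z ^ m * a m) z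
      have h1 : HasDerivAt (fun w : ℝ => w ^ (m + 1) * c (m + 1))
          ((↑(m + 1) * z ^ m) * c (m + 1)) z := (hasDerivAt_pow (m + 1) z).mul_const _
      convert h1 using 1
      show z ^ m * a m = (↑(m + 1) * z ^ m) * (a m / (↑m + 1))
      have hm : ((m : ℝ) + 1) ≠ 0 := by positivity
      push_cast
      field_simp
  have hG'le : ∀ n z, z ∈ Metric.ball (0:ℝ) δ → ‖G' n z‖ ≤ u n := by
    intro n z hz
    simp only [Metric.mem_ball, dist_zero_right, Real.norm_eq_abs] at hz
    cases n with
    | zero => simp [hG', hu]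
    | succ m =>
      show ‖z ^ m * a m‖ ≤ δ ^ m * |a m|
      rw [Real.norm_eq_abs, abs_mul, abs_pow]
      have h1 : |z| ^ m ≤ δ ^ m := pow_le_pow_left₀ (abs_nonneg z) hz.le m
      have h2 : 0 ≤ |a m| := abs_nonneg _
      nlinarith
  have hball : IsOpen (Metric.ball (0:ℝ) δ) := Metric.isOpen_ball
  have hconn : IsPreconnected (Metric.ball (0:ℝ) δ) := (convex_ball (0:ℝ) δ).isPreconnected
  have h0mem : (0:ℝ) ∈ Metric.ball (0:ℝ) δ := by simp [hδ0]
  have hG0 : Summable fun n => G n 0 := by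
    apply summable_of_ne_finset_zero (s := {0})
    intro n hn
    match n, hn with
    | (m+1), _ => simp [hG]
  set F : ℝ → ℝ := fun z => ∑' n, G n z with hF
  have hFd : ∀ z ∈ Metric.ball (0:ℝ) δ, HasDerivAt F (g (x₀ + z)) z := by
    intro z hz
    have h1 := hasDerivAt_tsum_of_isPreconnected hu_sum hball hconn
      (fun n y _ => hG'd n y) hG'le h0mem hG0 hz
    have hsumG' : Summable fun n => G' n z :=
      Summable.of_norm_bounded hu_sum (fun n => hG'le n z hz)
    have h2 : (∑' n, G' n z) = g (x₀ + z) := by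
      rw [Summable.tsum_eq_zero_add hsumG']
      have h3 : HasSum (fun n => z ^ n • a n) (g (x₀ + z)) := by
        apply hp
        simp only [Metric.mem_ball, dist_zero_right, Real.norm_eq_abs] at hz
        simpa [dist_zero_right, Real.norm_eq_abs] using hz.trans hδr
      have h4 : (∑' m, G' (m+1) z) = ∑' n, z ^ n • a n :=
        tsum_congr fun m => by show z ^ m * a m = z ^ m • a m; rw [smul_eq_mul]
      have h5 : G' 0 z = 0 := rfl
      rw [h5, zero_add, h4, h3.tsum_eq]
    rw [← h2]; exact h1
  -- f (x₀ + z) = F z + const on the ball; and F 0 = c 0 = f x₀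
  have hF0 : F 0 = f x₀ := by
    show (∑' n, G n 0) = f x₀
    rw [tsum_eq_single 0]
    · show (0:ℝ) ^ 0 * c 0 = f x₀
      rw [pow_zero, one_mul]
      rfl
    · intro n hn
      match n, hn with
      | (m+1), _ => simp [hG]
  have hconst : ∀ z ∈ Metric.ball (0:ℝ) δ, f (x₀ + z) - F z = f x₀ - F 0 := by
    intro z hz
    have hder : ∀ w ∈ Metric.ball (0:ℝ) δ, HasDerivAt (fun w => f (x₀ + w) - F w) 0 w := by
      intro w hw
      have h1 : HasDerivAt (fun w : ℝ => f (x₀ + w)) (g (x₀ + w)) w := by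
        have : HasDerivAt (fun w : ℝ => f (x₀ + w)) (g (x₀ + w) * 1) w :=
          (hf (x₀ + w)).comp w ((hasDerivAt_id w).const_add x₀)
        simpa using this
      have h2 : HasDerivAt (fun w => f (x₀ + w) - F w) (g (x₀ + w) - g (x₀ + w)) w :=
        h1.sub (hFd w hw)
      simpa using h2
    have := (convex_ball (0:ℝ) δ).is_const_of_fderivWithin_eq_zero
      (f := fun w => f (x₀ + w) - F w)
      (fun w hw => ((hder w hw).differentiableAt).differentiableWithinAt)
      (fun w hw => ?_) hz h0mem
    · simpa using this
    · rw [fderivWithin_eq_fderiv (hball.uniqueDiffWithinAt hw) ((hder w hw).differentiableAt)]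
      rw [(hder w hw).hasFDerivAt.fderiv]
      ext y
      simp
  -- conclude
  refine ⟨ofScalars ℝ c, hasFPowerSeriesAt_iff.2 ?_⟩
  rw [Metric.eventually_nhds_iff]
  refine ⟨δ, hδ0, fun {z} hz => ?_⟩
  have hz' : z ∈ Metric.ball (0:ℝ) δ := by simpa [Metric.mem_ball] using hz
  have hsumz : Summable fun n => G n z :=
    summable_of_summable_hasDerivAt_of_isPreconnected hu_sum hball hconn
      (fun n y hy => hG'd n y) hG'le h0mem hG0 hz'
  have heq : f (x₀ + z) = F z := by
    have := hconst z hz'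
    rw [hF0] at this
    linarith
  have hcoeff : ∀ n, (ofScalars ℝ c).coeff n = c n := by
    intro n
    have h1 : (ofScalars ℝ c).coeff n = (ofScalars ℝ c) n (fun _ => (1:ℝ)) := rfl
    rw [h1, FormalMultilinearSeries.ofScalars_apply_eq]
    simp
  have hfeq : (fun n => z ^ n • (ofScalars ℝ c).coeff n) = fun n => G n z := by
    funext n
    rw [hcoeff n]
    show z ^ n • c n = z ^ n * c n
    rw [smul_eq_mul]
  rw [hfeq, heq]
  exact hsumz.hasSum



open MeasureTheory Set Real


structure Good (f : ℝ → ℝ) : Prop where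
  analytic : AnalyticOnNhd ℝ f Set.univ
  bound : ∃ C a : ℝ, 0 ≤ C ∧ 0 ≤ a ∧ a < 1/2 ∧ ∀ x, |f x| ≤ C * Real.exp (a * |x| - x/2)

lemma good_h : Good h := by
  constructor
  · apply AnalyticOnNhd.div
    · exact analyticOnNhd_const
    · exact analyticOnNhd_const.add (analyticOnNhd_rexp.comp
        (analyticOnNhd_id.mul analyticOnNhd_const) (Set.mapsTo_univ _ _))
    · intro x _
      positivity
  · refine ⟨2, 0, by norm_num, le_refl 0, by norm_num, fun x => ?_⟩
    have hx : (0:ℝ) < h x := by unfold h; positivity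
    rw [abs_of_pos hx]
    have h2 : Real.exp (x/2) ≤ 1 + Real.exp (x/2) := by linarith
    calc h x = 2 / (1 + Real.exp (x/2)) := rfl
    _ ≤ 2 / Real.exp (x/2) := by
        apply div_le_div_of_nonneg_left (by norm_num) (Real.exp_pos _) h2
    _ = 2 * Real.exp (0 * |x| - x/2) := by
        rw [zero_mul, zero_sub, Real.exp_neg, div_eq_mul_inv]

-- the key pointwise bound
lemma good_pointwise {f : ℝ → ℝ} {C a : ℝ} (hC : 0 ≤ C) (ha : 0 ≤ a) (ha2 : a < 1/2)
    (hb : ∀ x, |f x| ≤ C * Real.exp (a * |x| - x/2)) :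
    ∃ C' b : ℝ, 0 ≤ C' ∧ 0 ≤ b ∧ b < 1/2 ∧ ∀ x t : ℝ, x < t →
      |t * f t| ≤ (C' * Real.exp (b * |x| - x/2) * Real.exp ((1/2 - b) * x))
        * Real.exp (-((1/2 - b) * t)) := by
  set c : ℝ := (1/2 - a)/2 with hc
  have hc0 : 0 < c := by rw [hc]; linarith
  set b : ℝ := a + c with hbdef
  have hb0 : 0 ≤ b := by positivity
  have hb2 : b < 1/2 := by rw [hbdef, hc]; linarith
  have hcb : 1/2 - b = c := by rw [hbdef]; ring
  refine ⟨C / c, b, by positivity, hb0, hb2, fun x t hxt => ?_⟩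
  have key1 : ∀ s : ℝ, |s| ≤ Real.exp (c * |s|) / c := by
    intro s
    rw [le_div_iff₀ hc0]
    calc |s| * c = c * |s| := mul_comm _ _
    _ ≤ Real.exp (c * |s|) := by
        have := Real.add_one_le_exp (c * |s|)
        linarith
  have key2 : |t * f t| ≤ (C / c) * Real.exp (b * |t| - t/2) := by
    rw [abs_mul]
    have hEE : Real.exp (c * |t|) * Real.exp (a * |t| - t/2) = Real.exp (b * |t| - t/2) := by
      rw [← Real.exp_add]; congr 1; rw [hbdef]; ring
    calc |t| * |f t| ≤ (Real.exp (c * |t|) / c) * (C * Real.exp (a * |t| - t/2)) := by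
          apply mul_le_mul (key1 t) (hb t) (abs_nonneg _) (by positivity)
    _ = (C / c) * (Real.exp (c * |t|) * Real.exp (a * |t| - t/2)) := by ring
    _ = (C / c) * Real.exp (b * |t| - t/2) := by rw [hEE]
  have key3 : Real.exp (b * |t| - t/2) ≤ Real.exp (b * |x| - x/2) * Real.exp (-((1/2 - b) * (t - x))) := by
    rw [← Real.exp_add, Real.exp_le_exp]
    have habs : |t| - |x| ≤ t - x := by
      have h1 := abs_sub_abs_le_abs_sub t x
      rwa [abs_of_nonneg (by linarith : (0:ℝ) ≤ t - x)] at h1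
    nlinarith [mul_nonneg hb0 (sub_nonneg.2 habs)]
  calc |t * f t| ≤ (C / c) * Real.exp (b * |t| - t/2) := key2
  _ ≤ (C / c) * (Real.exp (b * |x| - x/2) * Real.exp (-((1/2 - b) * (t - x)))) := by
      apply mul_le_mul_of_nonneg_left key3 (by positivity)
  _ = (C / c * Real.exp (b * |x| - x/2) * Real.exp ((1/2 - b) * x)) * Real.exp (-((1/2 - b) * t)) := by
      have hEE : Real.exp (-((1/2 - b) * (t - x)))
          = Real.exp ((1/2 - b) * x) * Real.exp (-((1/2 - b) * t)) := by
        rw [← Real.exp_add]; congr 1; ring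
      rw [hEE]; ring

lemma Good.integrableOn {f : ℝ → ℝ} (hf : Good f) (x : ℝ) :
    IntegrableOn (fun t => t * f t) (Ioi x) := by
  obtain ⟨C, a, hC, ha, ha2, hb⟩ := hf.bound
  obtain ⟨C', b, hC', hb0, hb2, hkey⟩ := good_pointwise hC ha ha2 hb
  set c : ℝ := 1/2 - b with hcdef
  have hc0 : 0 < c := by rw [hcdef]; linarith
  set K : ℝ := C' * Real.exp (b * |x| - x/2) * Real.exp (c * x) with hK
  have hint : IntegrableOn (fun t => K * Real.exp (-(c * t))) (Ioi x) := by
    have h1 := (exp_neg_integrableOn_Ioi x hc0).const_mul K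
    simp only [neg_mul] at h1; exact h1
  apply Integrable.mono' hint
  · exact (continuous_id.mul hf.analytic.continuous).aestronglyMeasurable
  · filter_upwards [ae_restrict_mem measurableSet_Ioi] with t ht
    rw [Real.norm_eq_abs]
    exact hkey x t ht

lemma P_eq {f : ℝ → ℝ} (hf : Good f) (x : ℝ) :
    P f x = P f 0 - ∫ t in (0:ℝ)..x, t * f t := by
  have hi := hf.integrableOn
  rcases le_total 0 x with hx | hx
  · rw [intervalIntegral.integral_of_le hx]
    have hsplit : (∫ t in Ioi (0:ℝ), t * f t)
        = (∫ t in Ioc 0 x, t * f t) + ∫ t in Ioi x, t * f t := by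
      rw [← setIntegral_union (Ioc_disjoint_Ioi le_rfl) measurableSet_Ioi
        ((hi 0).mono_set Ioc_subset_Ioi_self) (hi x), Ioc_union_Ioi_eq_Ioi hx]
    show (∫ t in Ioi x, t * f t) = (∫ t in Ioi (0:ℝ), t * f t) - ∫ t in Ioc 0 x, t * f t
    rw [hsplit]; ring
  · rw [intervalIntegral.integral_of_ge hx]
    have hsplit : (∫ t in Ioi x, t * f t)
        = (∫ t in Ioc x 0, t * f t) + ∫ t in Ioi (0:ℝ), t * f t := by
      rw [← setIntegral_union (Ioc_disjoint_Ioi le_rfl) measurableSet_Ioi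
        ((hi x).mono_set Ioc_subset_Ioi_self) (hi 0), Ioc_union_Ioi_eq_Ioi hx]
    show (∫ t in Ioi x, t * f t) = (∫ t in Ioi (0:ℝ), t * f t) - -∫ t in Ioc x 0, t * f t
    rw [hsplit]; ring

lemma Good.hasDerivAt_P {f : ℝ → ℝ} (hf : Good f) (x : ℝ) :
    HasDerivAt (P f) (-(x * f x)) x := by
  have hcont : Continuous fun t : ℝ => t * f t := continuous_id.mul hf.analytic.continuous
  have hF : HasDerivAt (fun y => ∫ t in (0:ℝ)..y, t * f t) (x * f x) x :=
    intervalIntegral.integral_hasDerivAt_right (hcont.intervalIntegrable 0 x)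
      (hcont.stronglyMeasurableAtFilter _ _) hcont.continuousAt
  have h2 : HasDerivAt (fun y => P f 0 - ∫ t in (0:ℝ)..y, t * f t) (0 - x * f x) x :=
    (hasDerivAt_const x _).sub hF
  have h3 : P f = fun y => P f 0 - ∫ t in (0:ℝ)..y, t * f t := funext fun y => P_eq hf y
  rw [h3]
  simpa using h2

lemma good_P {f : ℝ → ℝ} (hf : Good f) : Good (P f) := by
  constructor
  · intro x₀ _
    exact analyticAt_of_hasDerivAt (fun x => hf.hasDerivAt_P x)
      (((analyticOnNhd_id.mul hf.analytic).neg) x₀ trivial)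
  · obtain ⟨C, a, hC, ha, ha2, hb⟩ := hf.bound
    obtain ⟨C', b, hC', hb0, hb2, hkey⟩ := good_pointwise hC ha ha2 hb
    set c : ℝ := 1/2 - b with hcdef
    have hc0 : 0 < c := by rw [hcdef]; linarith
    refine ⟨C' / c, b, by positivity, hb0, hb2, fun x => ?_⟩
    set K : ℝ := C' * Real.exp (b * |x| - x/2) * Real.exp (c * x) with hK
    have hint : IntegrableOn (fun t => K * Real.exp (-(c * t))) (Ioi x) := by
      have h1 := (exp_neg_integrableOn_Ioi x hc0).const_mul K
      simp only [neg_mul] at h1; exact h1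
    have hle : |P f x| ≤ ∫ t in Ioi x, K * Real.exp (-(c * t)) := by
      rw [← Real.norm_eq_abs]
      apply norm_integral_le_of_norm_le hint
      filter_upwards [ae_restrict_mem measurableSet_Ioi] with t ht
      rw [Real.norm_eq_abs]
      exact hkey x t ht
    have hval : (∫ t in Ioi x, K * Real.exp (-(c * t))) = K * (c⁻¹ * Real.exp (-(c * x))) := by
      rw [integral_const_mul]
      congr 1
      have h2 := integral_comp_mul_left_Ioi (fun u => Real.exp (-u)) x hc0
      simp only [smul_eq_mul] at h2
      rw [h2, integral_exp_neg_Ioi]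
    have hfin : K * (c⁻¹ * Real.exp (-(c * x))) = (C' / c) * Real.exp (b * |x| - x/2) := by
      rw [hK]
      have h3 : Real.exp (c * x) * Real.exp (-(c * x)) = 1 := by
        rw [← Real.exp_add]; simp
      have h4 : C' * Real.exp (b * |x| - x/2) * Real.exp (c * x) * (c⁻¹ * Real.exp (-(c * x)))
          = C' * Real.exp (b * |x| - x/2) * c⁻¹ * (Real.exp (c * x) * Real.exp (-(c * x))) := by
        ring
      rw [h4, h3, mul_one, div_eq_mul_inv]
      ring
    calc |P f x| ≤ ∫ t in Ioi x, K * Real.exp (-(c * t)) := hle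
    _ = K * (c⁻¹ * Real.exp (-(c * x))) := hval
    _ = (C' / c) * Real.exp (b * |x| - x/2) := hfin



open MeasureTheory Set

lemma contDiff_iteratedDeriv {u : ℝ → ℝ} (hu : ContDiff ℝ (⊤:ℕ∞) u) (m : ℕ) :
    ContDiff ℝ (⊤:ℕ∞) (iteratedDeriv m u) := by
  rw [iteratedDeriv_eq_iterate]
  exact hu.iterate_deriv m

lemma iteratedDeriv_id_mul {u : ℝ → ℝ} (hu : ContDiff ℝ (⊤:ℕ∞) u) (m : ℕ) :
    iteratedDeriv m (fun x => x * u x)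
      = fun x => x * iteratedDeriv m u x + m * iteratedDeriv (m - 1) u x := by
  induction m with
  | zero => funext x; simp
  | succ m ih =>
    rw [iteratedDeriv_succ, ih]
    funext x
    have hA : ContDiff ℝ (⊤:ℕ∞) (iteratedDeriv m u) := contDiff_iteratedDeriv hu m
    have hB : ContDiff ℝ (⊤:ℕ∞) (iteratedDeriv (m-1) u) := contDiff_iteratedDeriv hu (m-1)
    have hAd : HasDerivAt (iteratedDeriv m u) (iteratedDeriv (m+1) u x) x := by
      rw [iteratedDeriv_succ]
      exact ((hA.differentiable (by norm_num)) x).hasDerivAt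
    have hBd : HasDerivAt (iteratedDeriv (m-1) u) (deriv (iteratedDeriv (m-1) u) x) x :=
      ((hB.differentiable (by norm_num)) x).hasDerivAt
    have hD : HasDerivAt (fun x => x * iteratedDeriv m u x + (m:ℝ) * iteratedDeriv (m-1) u x)
        (1 * iteratedDeriv m u x + x * iteratedDeriv (m+1) u x
          + (m:ℝ) * deriv (iteratedDeriv (m-1) u) x) x :=
      (((hasDerivAt_id x).mul hAd)).add (hBd.const_mul _)
    rw [hD.deriv]
    have hm : (m:ℝ) * deriv (iteratedDeriv (m-1) u) x = (m:ℝ) * iteratedDeriv m u x := by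
      cases m with
      | zero => simp
      | succ j =>
        congr 1
        rw [← iteratedDeriv_succ]
        norm_num
    rw [hm]
    push_cast
    ring

lemma iteratedDeriv_id_mul_zero {u : ℝ → ℝ} (hu : ContDiff ℝ (⊤:ℕ∞) u) (m : ℕ) :
    iteratedDeriv (m+1) (fun x => x * u x) 0 = (m+1 : ℝ) * iteratedDeriv m u 0 := by
  rw [iteratedDeriv_id_mul hu (m+1)]
  simp

lemma good_iter (n : ℕ) : Good (P^[n] h) := by
  induction n with
  | zero => simpa using good_h
  | succ n ih =>
    rw [Function.iterate_succ_apply']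
    exact good_P ih

/-- For `k ≤ n`, `(𝒫ⁿh)^{(2k)}(0) = (−1)^k · (2k−1)!! · (𝒫^{n−k}h)(0)`; in particular
`𝒫ⁿh` is well-defined and smooth on `ℝ` for every `n`. -/
theorem iteratedDeriv_P_iterate_h (n k : ℕ) (hk : k ≤ n) :
    iteratedDeriv (2 * k) (P^[n] h) 0 = (-1) ^ k * dfac k * (P^[n - k] h) 0 ∧
    ∀ m : ℕ, ContDiff ℝ (⊤ : ℕ∞) (P^[m] h) := by
  have smooth : ∀ m : ℕ, ContDiff ℝ (⊤:ℕ∞) (P^[m] h) := fun m =>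
    (good_iter m).analytic.contDiff
  have key : ∀ k n : ℕ, k ≤ n →
      iteratedDeriv (2 * k) (P^[n] h) 0 = (-1) ^ k * dfac k * (P^[n - k] h) 0 := by
    intro k
    induction k with
    | zero => intro n _; simp [dfac_zero]
    | succ k ih =>
      intro n hkn
      obtain ⟨m, rfl⟩ : ∃ m, n = m + 1 := ⟨n - 1, by omega⟩
      have h2 : 2 * (k + 1) = (2 * k + 1) + 1 := by ring
      rw [h2, iteratedDeriv_succ']
      have hd : deriv (P^[m+1] h) = fun x => -(x * (P^[m] h) x) := by
        funext x
        rw [Function.iterate_succ_apply']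
        exact ((good_iter m).hasDerivAt_P x).deriv
      rw [hd]
      have hneg : iteratedDeriv (2*k+1) (fun x => -(x * (P^[m] h) x)) 0
          = -iteratedDeriv (2*k+1) (fun x => x * (P^[m] h) x) 0 :=
        iteratedDeriv_neg (2*k+1) _ 0
      rw [hneg, iteratedDeriv_id_mul_zero (smooth m) (2*k), ih m (by omega), dfac_succ]
      have h3 : m + 1 - (k + 1) = m - k := by omega
      rw [h3]
      push_cast
      ring
  exact ⟨key k n hk, fun m => (good_iter m).analytic.contDiff⟩
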